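/- For every n ≥ 1 there exists k_n ≥ 1 such that L_{≤n} is strictly included in L_{≤n+k_n} (with respect to the standard encoding S₀); in particular the state-size hierarchy with respect to the standard encoding is infinite. -/

import Mathlib

/-! ## Transducers

A deterministic sequential transducer over the binary alphabet `Bool`
(`false` = 0, `true` = 1), with state set `{0, …, n-1}` (representing the
states `1, …, n` of the paper) and start state `0` (the paper's state `1`). -/

structure Transducer where
  n : ℕ
  npos : 0 < n
  delta : Fin n → Bool → Fin n × List Bool

namespace Transducer

/-- The start state. -/
def start (T : Transducer) : Fin T.n := ⟨0, T.npos⟩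

/-- The (state) size of a transducer: its number of states. -/
def size (T : Transducer) : ℕ := T.n

/-- Running `T` from state `q` on an input string: resulting state and output. -/
def run (T : Transducer) (q : Fin T.n) : List Bool → Fin T.n × List Bool
  | [] => (q, [])
  | a :: x =>
    let s := T.delta q a
    let r := T.run s.1 x
    (r.1, s.2 ++ r.2)

/-- The function `{0,1}* → {0,1}*` computed by the transducer `T`. -/
def output (T : Transducer) (p : List Bool) : List Bool :=
  (T.run T.start p).2

end Transducer

/-- The one-state identity transducer. -/
def idTransducer : Transducer :=
  ⟨1, Nat.one_pos, fun q b => (q, [b])⟩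

/-! ## The standard encoding `S₀` -/

/-- `bin i`: the binary representation of `i ≥ 1`, most significant bit first. -/
def binRep (i : ℕ) : List Bool := (Nat.bits i).reverse

/-- `v† = v₁0v₂0⋯v_{m-1}0v_m1`. -/
def dagger : List Bool → List Bool
  | [] => []
  | [a] => [a, true]
  | a :: b :: v => a :: false :: dagger (b :: v)

/-- `v◇`: the bitwise complement of `(1v)†`. -/
def diamond (v : List Bool) : List Bool := (dagger (true :: v)).map (!·)

/-- The encoding `bin(i_t)‡ ⬝ v_t◇` of a single transition from state `j`,
where `bin(i_t)‡ = ε` for a self-loop and `bin(i_t)† ` otherwise. -/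
def encTransition {n : ℕ} (j : Fin n) (t : Fin n × List Bool) : List Bool :=
  (if t.1 = j then [] else dagger (binRep (t.1.val + 1))) ++ diamond t.2

/-- The standard encoding of a transducer: the concatenation, over the states
`j = 1, …, n` in order, of the encodings of the transitions on input `0` and
input `1` from `j`. -/
def stdEnc (T : Transducer) : List Bool :=
  (List.finRange T.n).flatMap fun j =>
    encTransition j (T.delta j false) ++ encTransition j (T.delta j true)

/-- `D_{S₀}`, the set of standard encodings of transducers. -/
def DS0 : Set (List Bool) := Set.range stdEnc

/-- The set of sizes `|σ| + |p|` of descriptions `(T_σ, p)` of `x` with respect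
to the standard encoding. -/
def stdSizes (x : List Bool) : Set ℕ :=
  {c | ∃ (T : Transducer) (p : List Bool),
    T.output p = x ∧ c = (stdEnc T).length + p.length}

/-- `C x`: the finite-state complexity of `x` w.r.t. the standard encoding. -/
noncomputable def Cstd (x : List Bool) : ℕ := sInf (stdSizes x)

/-- `L_{≤ m}` w.r.t. the standard encoding: strings having a minimal
description by a transducer with at most `m` states. -/
def stdLle (m : ℕ) : Set (List Bool) :=
  {x | ∃ (T : Transducer) (p : List Bool),
    T.output p = x ∧ (stdEnc T).length + p.length = Cstd x ∧ T.size ≤ m}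

/-! ## Computable encodings -/

/-- A computable encoding `S = (D_S, f_S)` of all transducers: a decidable
(computable) set `D_S ⊆ {0,1}*` together with a computable bijection
`f_S : D_S → 𝒯_DGSM`, presented via a decoding function
`decode : {0,1}* → Option Transducer` defined exactly on `D_S`; its
computability is expressed via the (injective) standard encoding `stdEnc`. -/
structure CompEncoding where
  D : Set (List Bool)
  dec : ComputablePred (· ∈ D)
  decode : List Bool → Option Transducer
  decode_dom : ∀ σ, (decode σ).isSome ↔ σ ∈ D
  decode_inj : ∀ σ₁ ∈ D, ∀ σ₂ ∈ D, decode σ₁ = decode σ₂ → σ₁ = σ₂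
  decode_surj : ∀ T : Transducer, ∃ σ, decode σ = some T
  decode_comp : Computable fun σ => (decode σ).map stdEnc

namespace CompEncoding

/-- The set of sizes `|σ| + |p|` of descriptions `(T^S_σ, p)` of `x`. -/
def sizes (S : CompEncoding) (x : List Bool) : Set ℕ :=
  {c | ∃ (σ : List Bool) (T : Transducer) (p : List Bool),
    S.decode σ = some T ∧ T.output p = x ∧ c = σ.length + p.length}

/-- `C_S x`: the finite-state complexity of `x` w.r.t. the encoding `S`. -/
noncomputable def C (S : CompEncoding) (x : List Bool) : ℕ := sInf (S.sizes x)

/-- `L^S_{≤ m}`: strings having a minimal description by a transducer with at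
most `m` states (this is empty for `m = 0` since every transducer has at
least one state). -/
def Lle (S : CompEncoding) (m : ℕ) : Set (List Bool) :=
  {x | ∃ (σ : List Bool) (T : Transducer) (p : List Bool),
    S.decode σ = some T ∧ T.output p = x ∧
    σ.length + p.length = S.C x ∧ T.size ≤ m}

/-- `L^S_{= m} = L^S_{≤ m} \ L^S_{≤ m-1}`. -/
def Leq (S : CompEncoding) (m : ℕ) : Set (List Bool) := S.Lle m \ S.Lle (m - 1)

/-- `L^S_{∃min m}`: strings having a minimal description by a transducer with
exactly `m` states. -/
def LexistsMin (S : CompEncoding) (m : ℕ) : Set (List Bool) :=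
  {x | ∃ (σ : List Bool) (T : Transducer) (p : List Bool),
    S.decode σ = some T ∧ T.output p = x ∧
    σ.length + p.length = S.C x ∧ T.size = m}

end CompEncoding

/-! ## The strings `u_i` and `x_n(m)` from the proof of Theorem 1 -/

/-- `u_i = 1 0^i 1^{2n+2-i}` (for `1 ≤ i ≤ 2n+1`, a string of length `2n+3`). -/
def u (n i : ℕ) : List Bool :=
  true :: (List.replicate i false ++ List.replicate (2 * n + 2 - i) true)

/-- `x_n(m) = u_1^{m²} u_2^{m²} ⋯ u_{2n+1}^{m²}`. -/
def xnm (n m : ℕ) : List Bool :=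
  (List.range (2 * n + 1)).flatMap fun i => (List.replicate (m ^ 2) (u n (i + 1))).flatten

/-! ## The transducer `T₁` and input `p₁` from the proof of Theorem 1 -/

/-- The `2n`-state transducer `T₁` with `Δ(j,0) = (j, u_j^m)` for `1 ≤ j ≤ 2n`,
`Δ(j,1) = (j+1, ε)` for `1 ≤ j ≤ 2n-1`, and `Δ(2n,1) = (2n, u_{2n+1}^m)`. -/
def T1 (n m : ℕ) (hn : 0 < n) : Transducer where
  n := 2 * n
  npos := by omega
  delta := fun j b =>
    match b with
    | false => (j, (List.replicate m (u n (j.val + 1))).flatten)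
    | true =>
      if h : j.val + 1 < 2 * n then (⟨j.val + 1, h⟩, [])
      else (j, (List.replicate m (u n (2 * n + 1))).flatten)

/-- `p₁ = (0^m 1)^{2n-1} 0^m 1^m`. -/
def p1 (n m : ℕ) : List Bool :=
  (List.replicate (2 * n - 1) (List.replicate m false ++ [true])).flatten
    ++ List.replicate m false ++ List.replicate m true

/-! ## The transducers `T_n` from Section 5 -/

/-- `p_i`: the `i`-th prime (`p₁ = 2`, `p₂ = 3`, …). -/
noncomputable def nthPrime (i : ℕ) : ℕ := Nat.nth Nat.Prime (i - 1)

/-- The `n`-state transducer `T_n` with `Δ_n(1,0) = (1, 0^{p_n})`,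
`Δ_n(i,0) = (i, ε)` for `2 ≤ i ≤ n`, `Δ_n(j,1) = (j+1, ε)` for
`1 ≤ j ≤ n-1`, and `Δ_n(n,1) = (n, ε)`. -/
noncomputable def Tsec5 (n : ℕ) (hn : 0 < n) : Transducer where
  n := n
  npos := hn
  delta := fun j b =>
    match b with
    | false =>
      if j.val = 0 then (j, List.replicate (nthPrime n) false) else (j, [])
    | true =>
      if h : j.val + 1 < n then (⟨j.val + 1, h⟩, []) else (j, [])

/-- The defining properties of the encoding `S₁` of Theorem 4: each `T_n` is
encoded by `bin(n)`, and every transducer that is not one of the `T_n` is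
encoded by `0` concatenated with its standard encoding. -/
def IsS1 (S : CompEncoding) : Prop :=
  (∀ (n : ℕ) (hn : 0 < n), S.decode (binRep n) = some (Tsec5 n hn)) ∧
  (∀ T : Transducer, (∀ (n : ℕ) (hn : 0 < n), T ≠ Tsec5 n hn) →
    S.decode (false :: stdEnc T) = some T)

/-- The defining properties of the encoding `S₁'` of Corollary 2: each `T_n` is
encoded by `bin(n)† ⬝ 1^n`, and every transducer `T` that is not one of the
`T_n`, with standard encoding `σ`, is encoded by `0 ⬝ σ† ⬝ 1^{2^{|σ|}}`. -/
def IsS1' (S : CompEncoding) : Prop :=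
  (∀ (n : ℕ) (hn : 0 < n),
    S.decode (dagger (binRep n) ++ List.replicate n true) = some (Tsec5 n hn)) ∧
  (∀ T : Transducer, (∀ (n : ℕ) (hn : 0 < n), T ≠ Tsec5 n hn) →
    S.decode (false :: (dagger (stdEnc T) ++
      List.replicate (2 ^ (stdEnc T).length) true)) = some T)

/-!
The string `x = x_n(m) = u_1^{m²} ⋯ u_{2n+1}^{m²}` separates the levels once `m ≥ 6(2n+3)²`.
The `2n`-state transducer `T₁` describes it at cost `O(m n²) < m²`. Conversely, a transducer
with at most `n` states has at most `2n` transition outputs, and a word of length at least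
`2n+3` occurs in at most one factor `u_i^{m²}`, because any `2n+3` consecutive letters of it
contain exactly `i` zeros. So some factor `u_i^{m²}` contains no long transition output; the
outputs of a run producing `x` cover this factor of length `m²(2n+3)`, and all of them except
the two at its ends lie inside it, which forces `|σ| + |p| ≥ m²`. Hence `x ∉ L_{≤n}`, while `x`
lies in `L_{≤k}` for the size `k` of any minimal description of `x`.
-/

namespace Transducer

variable (T : Transducer)

theorem run_append (q : Fin T.n) (x y : List Bool) :
    T.run q (x ++ y) =
      ((T.run (T.run q x).1 y).1, (T.run q x).2 ++ (T.run (T.run q x).1 y).2) := by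
  induction x generalizing q with
  | nil => simp [run]
  | cons a x ih => simp [run, ih]

theorem run_replicate_of_delta_eq {q : Fin T.n} {a : Bool} {v : List Bool}
    (h : T.delta q a = (q, v)) (k : ℕ) :
    T.run q (List.replicate k a) = (q, (List.replicate k v).flatten) := by
  induction k with
  | zero => rfl
  | succ k ih => simp [List.replicate_succ, run, h, ih]

theorem exists_run_snd_eq_flatten (q : Fin T.n) (p : List Bool) :
    ∃ ws : List (List Bool), (T.run q p).2 = ws.flatten ∧ ws.length = p.length ∧
      ∀ w ∈ ws, ∃ q' a, w = (T.delta q' a).2 := by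
  induction p generalizing q with
  | nil => exact ⟨[], rfl, rfl, by simp⟩
  | cons a p ih =>
    obtain ⟨ws, hrun, hlen, hmem⟩ := ih (T.delta q a).1
    refine ⟨(T.delta q a).2 :: ws, by simp [run, hrun], by simp [hlen], ?_⟩
    rintro w (_ | ⟨_, hw⟩)
    exacts [⟨q, a, rfl⟩, hmem w hw]

end Transducer

theorem idTransducer_output (x : List Bool) : idTransducer.output x = x := by
  suffices ∀ q, (idTransducer.run q x).2 = x from this _
  induction x with
  | nil => intro q; rfl
  | cons a x ih => exact fun q => congrArg (a :: ·) (ih _)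

theorem length_dagger : ∀ v : List Bool, (dagger v).length = 2 * v.length
  | [] => rfl
  | [_] => rfl
  | a :: b :: v => by simp [dagger, length_dagger (b :: v)]; ring

theorem length_diamond (v : List Bool) : (diamond v).length = 2 * v.length + 2 := by
  simp [diamond, length_dagger]; ring

theorem length_binRep_le (k : ℕ) : (binRep k).length ≤ k := by
  rw [binRep, List.length_reverse, Nat.size_eq_bits_len]
  exact Nat.size_le.2 Nat.lt_two_pow_self

theorem length_encTransition_le {n : ℕ} (j : Fin n) (t : Fin n × List Bool) :
    (encTransition j t).length ≤ 2 * (t.1 + 1) + (2 * t.2.length + 2) := by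
  have := length_binRep_le (t.1 + 1)
  rw [encTransition, List.length_append, length_diamond]
  split
  · simp
  · simp only [length_dagger]; omega

theorem encTransition_isInfix_stdEnc (T : Transducer) (q : Fin T.n) (a : Bool) :
    encTransition q (T.delta q a) <:+: stdEnc T := by
  refine List.IsInfix.trans ?_ (List.infix_of_mem_flatten
    (List.mem_map_of_mem (f := fun j => encTransition j (T.delta j false) ++
      encTransition j (T.delta j true)) (List.mem_finRange q)))
  cases a
  exacts [List.infix_append_left, List.infix_append_right]

theorem length_delta_snd_le_stdEnc (T : Transducer) (q : Fin T.n) (a : Bool) :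
    (T.delta q a).2.length ≤ (stdEnc T).length := by
  have hsub := (encTransition_isInfix_stdEnc T q a).length_le
  have : (diamond (T.delta q a).2).length ≤ (encTransition q (T.delta q a)).length := by
    simp [encTransition]
  rw [length_diamond] at this
  omega

theorem length_stdEnc_le (T : Transducer) {B : ℕ}
    (h : ∀ q a, (encTransition q (T.delta q a)).length ≤ B) :
    (stdEnc T).length ≤ 2 * T.n * B := by
  rw [stdEnc, List.length_flatMap]
  refine (List.sum_le_card_nsmul _ (2 * B) ?_).trans (by simp; linarith)
  simp only [List.mem_map]
  rintro _ ⟨q, -, rfl⟩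
  have := h q false
  have := h q true
  simp only [List.length_append]
  omega

namespace List

variable {α : Type*} {E K : ℕ}

theorem length_le_of_isPrefix_flatten {ws : List (List α)} {win sg : List α}
    (hE : ∀ w ∈ ws, w.length ≤ E) (hK : ∀ w ∈ ws, w <:+: sg → w.length ≤ K)
    (hwin : win <+: ws.flatten) (hsg : win <:+: sg) : win.length ≤ E + ws.length * K := by
  induction ws generalizing win with
  | nil =>
    obtain ⟨t, ht⟩ := hwin
    simp_all
  | cons w ws ih =>
    obtain ⟨t, ht⟩ := hwin
    rw [flatten_cons, append_eq_append_iff] at ht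
    rcases ht with ⟨c, rfl, -⟩ | ⟨rest, rfl, hflat⟩
    · have := hE _ mem_cons_self
      simp only [length_append] at this
      exact Nat.le_add_right_of_le (by omega)
    · have hw := hK w mem_cons_self (infix_append_left.trans hsg)
      have hrest := ih (fun w' h' => hE w' (mem_cons_of_mem w h'))
        (fun w' h' => hK w' (mem_cons_of_mem w h')) ⟨t, hflat.symm⟩
        (infix_append_right.trans hsg)
      simp only [length_append, length_cons]
      linarith

theorem length_le_of_isInfix_flatten {ws : List (List α)} {win : List α}
    (hE : ∀ w ∈ ws, w.length ≤ E) (hK : ∀ w ∈ ws, w <:+: win → w.length ≤ K)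
    (hwin : win <:+: ws.flatten) : win.length ≤ 2 * E + ws.length * K := by
  induction ws with
  | nil =>
    obtain ⟨s, t, h⟩ := hwin
    simp_all
  | cons w ws ih =>
    have hE' := fun w' h' => hE w' (mem_cons_of_mem w h')
    have hK' := fun w' h' => hK w' (mem_cons_of_mem w h')
    obtain ⟨s, t, h⟩ := hwin
    rw [flatten_cons, append_assoc, append_eq_append_iff] at h
    rcases h with ⟨a, rfl, h⟩ | ⟨c, rfl, hflat⟩
    · have hw := hE _ mem_cons_self
      rw [append_eq_append_iff] at h
      rcases h with ⟨b, rfl, -⟩ | ⟨c, rfl, hflat⟩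
      · simp only [length_append] at hw ⊢
        exact Nat.le_add_right_of_le (by omega)
      · have hc := length_le_of_isPrefix_flatten hE' hK' ⟨t, hflat.symm⟩ infix_append_right
        simp only [length_append, length_cons] at hw hc ⊢
        linarith
    · have := ih hE' hK' ⟨c, t, by rw [hflat, append_assoc]⟩
      simp only [length_cons]
      linarith

end List

theorem Nat.count_shift_of_periodic {p : ℕ → Prop} [DecidablePred p] {L : ℕ}
    (hp : Function.Periodic p L) (d : ℕ) :
    Nat.count (fun k => p (d + k)) L = Nat.count p L := by
  have hp' : ∀ k, p (k + L) = p k := hp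
  have h₁ := Nat.count_add p d L
  have h₂ : Nat.count p (d + L) = Nat.count p L + Nat.count p d := by
    rw [add_comm, Nat.count_add]
    simp only [add_comm L, hp']
  omega

/-- Letter `t` of the infinite word `(1 0^j 1^(L-1-j))^ω`. -/
def blockWord (L j t : ℕ) : Bool := decide (t % L = 0 ∨ j < t % L)

def blockPrefix (L j N : ℕ) : List Bool := (List.range N).map (blockWord L j)

theorem blockWord_periodic (L j : ℕ) : Function.Periodic (blockWord L j) L := fun t => by
  simp [blockWord]

theorem count_blockWord_eq_false {L j : ℕ} (hj : j < L) (d : ℕ) :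
    Nat.count (fun k => blockWord L j (d + k) = false) L = j := by
  have hp : Function.Periodic (fun t => blockWord L j t = false) L := fun t => by
    simp only [blockWord_periodic L j t]
  have hzeros : (Finset.range L).filter (fun t => blockWord L j t = false) = Finset.Icc 1 j := by
    ext t
    rw [Finset.mem_filter, Finset.mem_range, Finset.mem_Icc]
    constructor
    · rintro ⟨ht, h⟩
      simp [blockWord, Nat.mod_eq_of_lt ht] at h
      omega
    · rintro ⟨h₁, h₂⟩
      have ht : t < L := by omega
      refine ⟨ht, ?_⟩
      simp [blockWord, Nat.mod_eq_of_lt ht]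
      omega
  rw [Nat.count_shift_of_periodic hp, Nat.count_eq_card_filter_range, hzeros, Nat.card_Icc,
    Nat.add_sub_cancel]

theorem exists_eq_blockWord_of_isInfix {L j N : ℕ} {w : List Bool}
    (h : w <:+: blockPrefix L j N) :
    ∃ d, ∀ i (hi : i < w.length), w[i] = blockWord L j (d + i) := by
  obtain ⟨s, t, h⟩ := h
  refine ⟨s.length, fun i hi => ?_⟩
  have := List.getElem_of_eq h (by simp; omega : s.length + i < (s ++ w ++ t).length)
  simpa [blockPrefix, List.getElem_append_right, List.getElem_append_left, hi] using this

theorem eq_of_isInfix_blockPrefix {L j₁ j₂ N₁ N₂ : ℕ} {w : List Bool} (hj₁ : j₁ < L)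
    (hj₂ : j₂ < L) (hw : L ≤ w.length) (h₁ : w <:+: blockPrefix L j₁ N₁)
    (h₂ : w <:+: blockPrefix L j₂ N₂) : j₁ = j₂ := by
  obtain ⟨d₁, hd₁⟩ := exists_eq_blockWord_of_isInfix h₁
  obtain ⟨d₂, hd₂⟩ := exists_eq_blockWord_of_isInfix h₂
  rw [← count_blockWord_eq_false hj₁ d₁, ← count_blockWord_eq_false hj₂ d₂,
    Nat.count_eq_card_filter_range, Nat.count_eq_card_filter_range]
  congr 1
  refine Finset.filter_congr fun i hi => ?_
  have hi : i < w.length := by simp at hi; omega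
  rw [← hd₁ i hi, hd₂ i hi]

theorem blockPrefix_add {L j a : ℕ} (ha : L ∣ a) (b : ℕ) :
    blockPrefix L j (a + b) = blockPrefix L j a ++ blockPrefix L j b := by
  obtain ⟨c, rfl⟩ := ha
  simp only [blockPrefix, List.range_add, List.map_append, List.map_map]
  congr 1
  refine List.map_congr_left fun t _ => ?_
  simp only [Function.comp_apply, add_comm _ t, mul_comm L c]
  exact (blockWord_periodic L j).nat_mul c t

theorem flatten_replicate_blockPrefix (L j k : ℕ) :
    (List.replicate k (blockPrefix L j L)).flatten = blockPrefix L j (k * L) := by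
  induction k with
  | zero => simp [blockPrefix]
  | succ k ih =>
    rw [List.replicate_succ, List.flatten_cons, ih, Nat.succ_mul, add_comm,
      blockPrefix_add dvd_rfl]

theorem length_u {n j : ℕ} (hj : j ≤ 2 * n + 2) : (u n j).length = 2 * n + 3 := by
  simp [u]; omega

theorem u_eq_blockPrefix {n j : ℕ} (hj : j ≤ 2 * n + 2) :
    u n j = blockPrefix (2 * n + 3) j (2 * n + 3) := by
  refine List.ext_getElem (by simp [length_u hj, blockPrefix]) fun t h₁ h₂ => ?_
  have ht : t < 2 * n + 3 := by simpa [blockPrefix] using h₂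
  simp only [blockPrefix, List.getElem_map, List.getElem_range, blockWord, Nat.mod_eq_of_lt ht]
  rcases t with _ | t
  · simp [u]
  · simp [u, List.getElem_append, List.getElem_replicate]
    simp only [← decide_not, Nat.not_le]

def xnmFactor (n m i : ℕ) : List Bool := (List.replicate (m ^ 2) (u n (i + 1))).flatten

theorem xnm_eq_flatten (n m : ℕ) :
    xnm n m = ((List.range (2 * n + 1)).map (xnmFactor n m)).flatten := rfl

theorem xnmFactor_eq_blockPrefix {n m i : ℕ} (hi : i ≤ 2 * n + 1) :
    xnmFactor n m i = blockPrefix (2 * n + 3) (i + 1) (m ^ 2 * (2 * n + 3)) := by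
  rw [xnmFactor, u_eq_blockPrefix (by omega), flatten_replicate_blockPrefix]

theorem length_xnmFactor {n m i : ℕ} (hi : i ≤ 2 * n + 1) :
    (xnmFactor n m i).length = m ^ 2 * (2 * n + 3) := by
  simp [xnmFactor_eq_blockPrefix hi, blockPrefix]

theorem xnmFactor_isInfix_xnm {n m i : ℕ} (hi : i < 2 * n + 1) : xnmFactor n m i <:+: xnm n m :=
  List.infix_of_mem_flatten (List.mem_map_of_mem (List.mem_range.2 hi))

theorem eq_of_isInfix_xnmFactor {n m i i' : ℕ} {w : List Bool} (hi : i < 2 * n + 1)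
    (hi' : i' < 2 * n + 1) (hw : 2 * n + 3 ≤ w.length) (h : w <:+: xnmFactor n m i)
    (h' : w <:+: xnmFactor n m i') : i = i' := by
  rw [xnmFactor_eq_blockPrefix hi.le] at h
  rw [xnmFactor_eq_blockPrefix hi'.le] at h'
  have := eq_of_isInfix_blockPrefix (by omega) (by omega) hw h h'
  omega

theorem exists_xnmFactor_forall_not_isInfix {n : ℕ} (m : ℕ) (T : Transducer)
    (hT : T.size ≤ n) :
    ∃ i < 2 * n + 1, ∀ q a, 2 * n + 3 ≤ (T.delta q a).2.length →
      ¬ (T.delta q a).2 <:+: xnmFactor n m i := by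
  by_contra! h
  choose q a hlong hinf using fun i : Fin (2 * n + 1) => h i i.isLt
  have hinj : Function.Injective fun i => (q i, a i) := by
    intro i i' hii'
    simp only [Prod.mk.injEq] at hii'
    obtain ⟨hq, ha⟩ := hii'
    refine Fin.ext (eq_of_isInfix_xnmFactor i.isLt i'.isLt (hlong i) (hinf i) ?_)
    rw [hq, ha]
    exact hinf i'
  have := Fintype.card_le_of_injective _ hinj
  simp only [Fintype.card_fin, Fintype.card_prod, Fintype.card_bool] at this
  rw [Transducer.size] at hT
  omega

theorem sq_le_of_output_eq_xnm {n m : ℕ} {T : Transducer} {p : List Bool} (hT : T.size ≤ n)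
    (h : T.output p = xnm n m) : m ^ 2 ≤ (stdEnc T).length + p.length := by
  obtain ⟨i, hi, hquiet⟩ := exists_xnmFactor_forall_not_isInfix m T hT
  obtain ⟨ws, hws, hlen, hmem⟩ := T.exists_run_snd_eq_flatten T.start p
  have hcover := List.length_le_of_isInfix_flatten (E := (stdEnc T).length) (K := 2 * n + 3)
    (ws := ws) (win := xnmFactor n m i) ?_ ?_ ?_
  · rw [length_xnmFactor hi.le, hlen] at hcover
    nlinarith
  · intro w hw
    obtain ⟨q, a, rfl⟩ := hmem w hw
    exact length_delta_snd_le_stdEnc T q a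
  · intro w hw hinf
    obtain ⟨q, a, rfl⟩ := hmem w hw
    by_contra hlong
    exact hquiet q a (by omega) hinf
  · rw [← hws, ← Transducer.output, h]
    exact xnmFactor_isInfix_xnm hi

theorem List.flatten_replicate_flatten_replicate {α : Type*} (a b : ℕ) (v : List α) :
    (List.replicate a (List.replicate b v).flatten).flatten =
      (List.replicate (a * b) v).flatten := by
  induction a with
  | zero => simp
  | succ a ih =>
    rw [List.replicate_succ, List.flatten_cons, ih, Nat.succ_mul, add_comm, List.replicate_add,
      List.flatten_append]

section T1

variable {n : ℕ} (m : ℕ) (hn : 0 < n)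

theorem T1_run_replicate_false (j : Fin (T1 n m hn).n) :
    (T1 n m hn).run j (List.replicate m false) = (j, xnmFactor n m j) := by
  rw [Transducer.run_replicate_of_delta_eq _ rfl, List.flatten_replicate_flatten_replicate, ← sq]
  rfl

theorem T1_run_replicate_true (j : Fin (T1 n m hn).n) (hj : j.val = 2 * n - 1) :
    (T1 n m hn).run j (List.replicate m true) = (j, xnmFactor n m (2 * n)) := by
  have h : (T1 n m hn).delta j true = (j, (List.replicate m (u n (2 * n + 1))).flatten) := by
    simp [T1]
    omega
  rw [Transducer.run_replicate_of_delta_eq _ h, List.flatten_replicate_flatten_replicate, ← sq]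
  rfl

theorem T1_run_snd (d s : ℕ) (hs : s + d = 2 * n - 1) :
    ((T1 n m hn).run ⟨s, show s < 2 * n by omega⟩
      ((List.replicate d (List.replicate m false ++ [true])).flatten
        ++ (List.replicate m false ++ List.replicate m true))).2 =
      ((List.range (d + 2)).map fun i => xnmFactor n m (s + i)).flatten := by
  induction d generalizing s with
  | zero =>
    obtain rfl : s = 2 * n - 1 := by omega
    simp [Transducer.run_append, T1_run_replicate_false, T1_run_replicate_true,
      List.range_succ]
    congr 1
    omega
  | succ d ih =>
    have h : (T1 n m hn).delta ⟨s, show s < 2 * n by omega⟩ true =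
        (⟨s + 1, show s + 1 < 2 * n by omega⟩, []) := by
      simp only [T1]
      rw [dif_pos (by omega)]
    rw [List.range_succ_eq_map, List.replicate_succ, List.flatten_cons, List.append_assoc,
      List.append_assoc, Transducer.run_append, T1_run_replicate_false, List.singleton_append]
    simp only [Transducer.run, h]
    simp only [List.nil_append, List.map_cons, List.map_map, List.flatten_cons, add_zero,
      ih (s + 1) (by omega)]
    refine congrArg (_ ++ List.flatten ·) (List.map_congr_left fun i _ => ?_)
    simp only [Function.comp_apply, Nat.succ_eq_add_one]
    ring_nf

theorem T1_output : (T1 n m hn).output (p1 n m) = xnm n m := by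
  have := T1_run_snd m hn (2 * n - 1) 0 (by omega)
  rw [show 2 * n - 1 + 2 = 2 * n + 1 by omega] at this
  simpa [Transducer.output, Transducer.start, p1, xnm_eq_flatten] using this

theorem length_delta_T1_le (q : Fin (T1 n m hn).n) (a : Bool) :
    ((T1 n m hn).delta q a).2.length ≤ m * (2 * n + 3) := by
  cases a
  · have hq : q.val < 2 * n := q.isLt
    simp [T1, length_u (show q.val + 1 ≤ 2 * n + 2 by omega)]
  · simp only [T1]
    split <;> simp [length_u (show 2 * n + 1 ≤ 2 * n + 2 by omega)]

theorem length_stdEnc_T1_le :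
    (stdEnc (T1 n m hn)).length ≤ 2 * (2 * n) * (4 * n + 2 * (m * (2 * n + 3)) + 2) := by
  refine length_stdEnc_le _ fun q a => (length_encTransition_le _ _).trans ?_
  have hq : ((T1 n m hn).delta q a).1.val < 2 * n := ((T1 n m hn).delta q a).1.isLt
  have := length_delta_T1_le m hn q a
  omega

end T1

theorem length_p1_le {n : ℕ} (hn : 0 < n) (m : ℕ) :
    (p1 n m).length ≤ (2 * n + 1) * (m + 1) := by
  have h : (2 * n + 1) * (m + 1) = (2 * n - 1) * (m + 1) + 2 * (m + 1) := by
    rw [← add_mul]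
    congr 1
    omega
  simp [p1, h]
  omega

theorem length_stdEnc_T1_add_length_p1_lt {n m : ℕ} (hn : 0 < n)
    (hm : 6 * (2 * n + 3) ^ 2 ≤ m) :
    (stdEnc (T1 n m hn)).length + (p1 n m).length < m ^ 2 := by
  have h₁ := length_stdEnc_T1_le m hn
  have h₂ := length_p1_le hn m
  nlinarith

theorem xnm_not_mem_stdLle {n m : ℕ} (hn : 0 < n) (hm : 6 * (2 * n + 3) ^ 2 ≤ m) :
    xnm n m ∉ stdLle n := by
  rintro ⟨T, p, hout, hcost, hsize⟩
  have hlower := sq_le_of_output_eq_xnm hsize hout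
  have hupper : Cstd (xnm n m) ≤ (stdEnc (T1 n m hn)).length + (p1 n m).length :=
    Nat.sInf_le ⟨T1 n m hn, p1 n m, T1_output m hn, rfl⟩
  have := length_stdEnc_T1_add_length_p1_lt hn hm
  omega

theorem stdLle_mono : Monotone stdLle := fun _ _ hmn _ ⟨T, p, hout, hcost, hsize⟩ =>
  ⟨T, p, hout, hcost, hsize.trans hmn⟩

theorem exists_pos_mem_stdLle (x : List Bool) : ∃ k, 1 ≤ k ∧ x ∈ stdLle k := by
  have hne : (stdSizes x).Nonempty := ⟨_, idTransducer, x, idTransducer_output x, rfl⟩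
  obtain ⟨T, p, hout, hcost⟩ := Nat.sInf_mem hne
  exact ⟨T.size, T.npos, T, p, hout, hcost.symm, le_rfl⟩

theorem stmt1 : ∀ n : ℕ, 1 ≤ n → ∃ k : ℕ, 1 ≤ k ∧ stdLle n ⊂ stdLle (n + k) := by
  intro n hn
  obtain ⟨k, hk, hx⟩ := exists_pos_mem_stdLle (xnm n (6 * (2 * n + 3) ^ 2))
  exact ⟨k, hk, (Set.ssubset_iff_of_subset (stdLle_mono (by omega))).2
    ⟨_, stdLle_mono (by omega) hx, xnm_not_mem_stdLle hn le_rfl⟩⟩
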